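/- Let M be a metric space on ground set V ∪ {x}, where x ∉ V and V = {0,1,...,n−1}, and assume [uvw] holds whenever 0 ≤ u < v < w < n. If i < k, [i x k], i < j and [i j x], then j < k and [j x k]. -/

import Mathlib

universe u

/-- A function `d` is a metric (distance function) on `α`. -/
structure IsMetric {α : Type*} (d : α → α → ℝ) : Prop where
  eq_iff : ∀ x y, d x y = 0 ↔ x = y
  symm : ∀ x y, d x y = d y x
  triangle : ∀ x y z, d x z ≤ d x y + d y z

/-- `[u v w]`: the points are pairwise distinct and `v` lies between `u` and `w`. -/
def MBtw {α : Type*} (d : α → α → ℝ) (u v w : α) : Prop :=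
  u ≠ v ∧ u ≠ w ∧ v ≠ w ∧ d u v + d v w = d u w

/-- The hyperedge set `E_M` associated with a metric space: all triples
`{x,y,z}` such that one of the three points is between the other two. -/
def metricEdges {α : Type*} (d : α → α → ℝ) : Set (Set α) :=
  {s | ∃ u v w : α, s = {u, v, w} ∧ MBtw d u v w}

/-- A 3-uniform hypergraph (given by its hyperedge set on vertex type `V`)
is metric if there is a metric space on ground set `V` with `E = E_M`. -/
def IsMetricHypergraph {V : Type*} (E : Set (Set V)) : Prop :=
  ∃ d : V → V → ℝ, IsMetric d ∧ E = metricEdges d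

/-- The hypergraph based on a graph `G`: the vertex set is `V ∪ {x}` (here
`Option V`, with `none` playing the role of the extra point `x`); the
hyperedges are all three-point subsets of `V` together with all sets
`{x,u,v}` with `{u,v}` an edge of `G`. -/
def basedOn {V : Type*} (G : SimpleGraph V) : Set (Set (Option V)) :=
  {s | (∃ u v w : V, u ≠ v ∧ u ≠ w ∧ v ≠ w ∧ s = {some u, some v, some w}) ∨
       (∃ u v : V, G.Adj u v ∧ s = {none, some u, some v})}

/-- The hyperedge set of the subhypergraph induced on `U`. -/
def inducedEdges {V : Type*} (E : Set (Set V)) (U : Set V) : Set (Set U) :=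
  {s | Subtype.val '' s ∈ E}

/-- The line `L_M(xy)` determined by two points of a metric space. -/
def lineOf {α : Type*} (d : α → α → ℝ) (x y : α) : Set α :=
  {x, y} ∪ {z | ({x, y, z} : Set α) ∈ metricEdges d}

/-- `e` is a two-point set forming an edge of `G`. -/
def IsEdgePair {V : Type*} (G : SimpleGraph V) (e : Set V) : Prop :=
  ∃ u v : V, G.Adj u v ∧ e = {u, v}

/-- The equivalence relation `≡_G`: two pairs are equivalent iff both are
edges of `G` or both are non-edges of `G`. -/
def graphEquiv {V : Type*} (G : SimpleGraph V) (e f : Set V) : Prop :=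
  (IsEdgePair G e ∧ IsEdgePair G f) ∨ (¬ IsEdgePair G e ∧ ¬ IsEdgePair G f)

/-- A relation `r` on two-point subsets of `V` is an obstacle if no metric
space on a superset `W` of `V` has `L_M(ab) = L_M(cd) ↔ {a,b} r {c,d}`
for all two-point subsets `{a,b}`, `{c,d}` of `V`. -/
def IsObstacle {V : Type u} (r : Set V → Set V → Prop) : Prop :=
  ¬ ∃ (W : Type u) (f : V ↪ W) (d : W → W → ℝ), IsMetric d ∧
      ∀ a b c e : V, a ≠ b → c ≠ e →
        (lineOf d (f a) (f b) = lineOf d (f c) (f e) ↔ r {a, b} {c, e})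

/-- The restriction of a relation on two-point subsets of `V` to the
two-point subsets of `U ⊆ V`. -/
def restrictRel {V : Type*} (r : Set V → Set V → Prop) (U : Set V) :
    Set U → Set U → Prop :=
  fun e f => r (Subtype.val '' e) (Subtype.val '' f)

/-!
Betweenness composes in any metric space: `[i x k]` and `[i j x]` give `[i j k]` and `[j x k]`,
since `d i k = d i j + d j x + d x k` forces equality in two triangle inequalities.
Then `k < j` is impossible, because linearity would give `[i k j]`, incompatible with `[i j k]`.
-/

namespace IsMetric

variable {α : Type*} {d : α → α → ℝ}

theorem dist_self (hd : IsMetric d) (x : α) : d x x = 0 :=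
  (hd.eq_iff x x).2 rfl

theorem dist_nonneg (hd : IsMetric d) (x y : α) : 0 ≤ d x y := by
  have := hd.triangle x y x
  rw [hd.dist_self, hd.symm y x] at this
  linarith

theorem dist_pos (hd : IsMetric d) {x y : α} (h : x ≠ y) : 0 < d x y :=
  (hd.dist_nonneg x y).lt_of_ne fun h0 => h ((hd.eq_iff x y).1 h0.symm)

theorem not_mbtw_swap (hd : IsMetric d) {u v w : α} (h : MBtw d u v w) : ¬ MBtw d u w v := by
  rintro ⟨-, -, hwv, e⟩
  linarith [h.2.2.2, hd.dist_pos hwv, hd.symm w v]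

theorem mbtw_trans_left (hd : IsMetric d) {w x y z : α} (h₁ : MBtw d w y z)
    (h₂ : MBtw d w x y) : MBtw d w x z := by
  obtain ⟨-, hwz, -, e₁⟩ := h₁
  obtain ⟨hwx, -, hxy, e₂⟩ := h₂
  have hxz : x ≠ z := by
    rintro rfl
    have := hd.dist_pos hxy
    rw [hd.symm y x] at e₁
    linarith
  refine ⟨hwx, hwz, hxz, le_antisymm ?_ (hd.triangle w x z)⟩
  linarith [hd.triangle x y z]

theorem mbtw_trans_left_right (hd : IsMetric d) {w x y z : α} (h₁ : MBtw d w y z)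
    (h₂ : MBtw d w x y) : MBtw d x y z := by
  have hxz := (hd.mbtw_trans_left h₁ h₂).2.2.1
  refine ⟨h₂.2.2.1, hxz, h₁.2.2.1, le_antisymm ?_ (hd.triangle x y z)⟩
  linarith [hd.triangle w x z, h₁.2.2.2, h₂.2.2.2]

end IsMetric

theorem stmt_13_general (n : ℕ) (d : Option (Fin n) → Option (Fin n) → ℝ)
    (hd : IsMetric d)
    (hlin : ∀ u v w : Fin n, u < v → v < w → MBtw d (some u) (some v) (some w))
    (i j k : Fin n) (hik : i < k) (h1 : MBtw d (some i) none (some k))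
    (h2 : MBtw d (some i) (some j) none) :
    j < k ∧ MBtw d (some j) none (some k) := by
  have hijk := hd.mbtw_trans_left h1 h2
  have hjk : j < k := by
    refine lt_of_le_of_ne (not_lt.1 fun hkj => hd.not_mbtw_swap hijk (hlin i k j hik hkj)) ?_
    exact fun h => hijk.2.2.1 (congrArg some h)
  exact ⟨hjk, hd.mbtw_trans_left_right h1 h2⟩

/-- With `V = {0,…,n-1}` linearly placed in a metric space on `V ∪ {x}`:
if `i < k`, `[i x k]`, `i < j` and `[i j x]`, then `j < k` and `[j x k]`. -/
theorem stmt_13 (n : ℕ) (d : Option (Fin n) → Option (Fin n) → ℝ)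
    (hd : IsMetric d)
    (hlin : ∀ u v w : Fin n, u < v → v < w → MBtw d (some u) (some v) (some w))
    (i j k : Fin n) (hik : i < k) (h1 : MBtw d (some i) none (some k))
    (hij : i < j) (h2 : MBtw d (some i) (some j) none) :
    j < k ∧ MBtw d (some j) none (some k) :=
  stmt_13_general n d hd hlin i j k hik h1 h2
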